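/- arXiv:2401.08112 — 4 statements merged into one kernel-verified Lean document; each statement's English description precedes it below -/
import Mathlib

section
/- For every integrable real-valued random variable ξ on (Ω, ℱ, ℙ), the two iterated conditional expectations with respect to the overlapping information σ-algebras agree and equal the conditional expectation on the common information: 𝔼[𝔼[ξ | 𝒢¹] | 𝒢²] = 𝔼[ξ | 𝒞] = 𝔼[𝔼[ξ | 𝒢²] | 𝒢¹] ℙ-almost surely. (This is the identity ξ̌̂ := 𝔼[𝔼[ξ|𝒢¹ₜ]|𝒢²ₜ] ≡ 𝔼[𝔼[ξ|𝒢²ₜ]|𝒢¹ₜ] asserted in Section 3 of the paper.) -/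
open MeasureTheory ProbabilityTheory

/-! `𝔼[ξ | 𝒜 ⊔ 𝒞]` is measurable with respect to `𝒜 ⊔ 𝒞`, which is independent of `ℬ`;
hence conditioning it on `ℬ ⊔ 𝒞` is the same as conditioning it on `𝒞`, and the tower property
gives `𝔼[ξ | 𝒞]`. That reduction is checked on the π-system of intersections `b ∩ c` generating
`ℬ ⊔ 𝒞`, where independence factorizes the integrals; the other identity follows by swapping the
roles of `𝒜` and `ℬ`. -/

theorem IsPiSystem.image2_inter {Ω : Type*} {C D : Set (Set Ω)} (hC : IsPiSystem C)
    (hD : IsPiSystem D) : IsPiSystem (Set.image2 (· ∩ ·) C D) := by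
  rintro _ ⟨s₁, hs₁, t₁, ht₁, rfl⟩ _ ⟨s₂, hs₂, t₂, ht₂, rfl⟩ hne
  rw [Set.inter_inter_inter_comm] at hne ⊢
  exact Set.mem_image2_of_mem (hC _ hs₁ _ hs₂ (hne.mono Set.inter_subset_left))
    (hD _ ht₁ _ ht₂ (hne.mono Set.inter_subset_right))

namespace MeasurableSpace

theorem sup_eq_generateFrom_image2_inter {Ω : Type*} (m₁ m₂ : MeasurableSpace Ω) :
    m₁ ⊔ m₂ = generateFrom
      (Set.image2 (· ∩ ·) {s | MeasurableSet[m₁] s} {t | MeasurableSet[m₂] t}) := by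
  refine le_antisymm (sup_le ?_ ?_) (generateFrom_le ?_)
  · exact fun s hs ↦ measurableSet_generateFrom ⟨s, hs, Set.univ, .univ, Set.inter_univ s⟩
  · exact fun t ht ↦ measurableSet_generateFrom ⟨Set.univ, .univ, t, ht, Set.univ_inter t⟩
  · rintro _ ⟨s, hs, t, ht, rfl⟩
    exact (le_sup_left (b := m₂) _ hs).inter (le_sup_right (a := m₁) _ ht)

end MeasurableSpace

namespace MeasureTheory

variable {Ω E : Type*} [NormedAddCommGroup E] [NormedSpace ℝ E]
  {m m₁ m₂ m₃ mΩ : MeasurableSpace Ω} {μ : Measure Ω} {f g : Ω → E}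

theorem setIntegral_eq_setIntegral_of_isPiSystem (hm : m ≤ mΩ) {C : Set (Set Ω)}
    (hgen : m = MeasurableSpace.generateFrom C) (hC : IsPiSystem C)
    (hf : Integrable f μ) (hg : Integrable g μ) (h_univ : ∫ x, f x ∂μ = ∫ x, g x ∂μ)
    (h_basic : ∀ s ∈ C, ∫ x in s, f x ∂μ = ∫ x in s, g x ∂μ)
    {s : Set Ω} (hs : MeasurableSet[m] s) :
    ∫ x in s, f x ∂μ = ∫ x in s, g x ∂μ := by
  induction s, hs using MeasurableSpace.induction_on_inter hgen hC with
  | empty => simp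
  | basic t ht => exact h_basic t ht
  | compl t ht iht =>
    rw [← sub_eq_of_eq_add' (integral_add_compl (hm t ht) hf).symm,
      ← sub_eq_of_eq_add' (integral_add_compl (hm t ht) hg).symm, iht, h_univ]
  | iUnion t htd htm iht =>
    rw [integral_iUnion (fun i ↦ hm _ (htm i)) htd hf.integrableOn,
      integral_iUnion (fun i ↦ hm _ (htm i)) htd hg.integrableOn]
    exact tsum_congr iht

variable [CompleteSpace E] [IsFiniteMeasure μ]

theorem setIntegral_eq_measureReal_smul_integral_of_indep (hm₁ : m₁ ≤ mΩ) (hm₂ : m₂ ≤ mΩ)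
    (hind : Indep m₁ m₂ μ) (hf : StronglyMeasurable[m₁] f) (hfi : Integrable f μ)
    {s : Set Ω} (hs : MeasurableSet[m₂] s) :
    ∫ x in s, f x ∂μ = μ.real s • ∫ x, f x ∂μ :=
  calc ∫ x in s, f x ∂μ = ∫ x in s, (μ[f | m₂]) x ∂μ := (setIntegral_condExp hm₂ hfi hs).symm
    _ = ∫ _ in s, ∫ x, f x ∂μ ∂μ :=
      setIntegral_congr_ae (hm₂ _ hs) ((condExp_indep_eq hm₁ hm₂ hf hind).mono fun _ hx _ ↦ hx)
    _ = μ.real s • ∫ x, f x ∂μ := setIntegral_const _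

theorem setIntegral_inter_eq_measureReal_smul_setIntegral_of_indep (hm₁ : m₁ ≤ mΩ)
    (hm₂ : m₂ ≤ mΩ) (hind : Indep m₁ m₂ μ) (hf : StronglyMeasurable[m₁] f)
    (hfi : Integrable f μ) {s t : Set Ω} (hs : MeasurableSet[m₂] s) (ht : MeasurableSet[m₁] t) :
    ∫ x in s ∩ t, f x ∂μ = μ.real s • ∫ x in t, f x ∂μ := by
  rw [← setIntegral_indicator (hm₁ _ ht), ← integral_indicator (hm₁ _ ht)]
  exact setIntegral_eq_measureReal_smul_integral_of_indep hm₁ hm₂ hind (hf.indicator ht)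
    (hfi.indicator (hm₁ _ ht)) hs

theorem condExp_sup_eq_condExp_of_indep (hm₁ : m₁ ≤ mΩ) (hm₂ : m₂ ≤ mΩ) (hm₃ : m₃ ≤ mΩ)
    (hm₃₁ : m₃ ≤ m₁) (hind : Indep m₁ m₂ μ) (hf : StronglyMeasurable[m₁] f)
    (hfi : Integrable f μ) :
    μ[f | m₂ ⊔ m₃] =ᵐ[μ] μ[f | m₃] := by
  refine (ae_eq_condExp_of_forall_setIntegral_eq (sup_le hm₂ hm₃) hfi
    (fun _ _ _ ↦ integrable_condExp.integrableOn) (fun s hs _ ↦ ?_)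
    (stronglyMeasurable_condExp.mono (le_sup_right : m₃ ≤ m₂ ⊔ m₃)).aestronglyMeasurable).symm
  refine setIntegral_eq_setIntegral_of_isPiSystem (sup_le hm₂ hm₃)
    (MeasurableSpace.sup_eq_generateFrom_image2_inter m₂ m₃)
    (.image2_inter (@MeasurableSpace.isPiSystem_measurableSet Ω m₂)
      (@MeasurableSpace.isPiSystem_measurableSet Ω m₃))
    integrable_condExp hfi (integral_condExp hm₃) ?_ hs
  rintro _ ⟨s, hs, t, ht, rfl⟩
  rw [setIntegral_inter_eq_measureReal_smul_setIntegral_of_indep hm₁ hm₂ hind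
      (stronglyMeasurable_condExp.mono hm₃₁) integrable_condExp hs (hm₃₁ _ ht),
    setIntegral_inter_eq_measureReal_smul_setIntegral_of_indep hm₁ hm₂ hind hf hfi hs (hm₃₁ _ ht),
    setIntegral_condExp hm₃ hfi ht]

theorem condExp_condExp_sup_eq_condExp_of_indep (hm₁ : m₁ ≤ mΩ) (hm₂ : m₂ ≤ mΩ)
    (hm₃ : m₃ ≤ mΩ) (hind : Indep (m₁ ⊔ m₃) m₂ μ) (f : Ω → E) :
    μ[μ[f | m₁ ⊔ m₃] | m₂ ⊔ m₃] =ᵐ[μ] μ[f | m₃] :=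
  (condExp_sup_eq_condExp_of_indep (sup_le hm₁ hm₃) hm₂ hm₃ le_sup_right hind
    stronglyMeasurable_condExp integrable_condExp).trans
    (condExp_condExp_of_le le_sup_right (sup_le hm₁ hm₃))

end MeasureTheory

namespace ProbabilityTheory

variable {Ω : Type*} {m₁ m₂ m₃ mΩ : MeasurableSpace Ω} {μ : Measure Ω}

theorem iIndep.indep_sup_of_fin_three (hm₁ : m₁ ≤ mΩ) (hm₂ : m₂ ≤ mΩ) (hm₃ : m₃ ≤ mΩ)
    (h : iIndep ![m₁, m₂, m₃] μ) : Indep (m₁ ⊔ m₃) m₂ μ := by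
  have h_le : ∀ i, ![m₁, m₂, m₃] i ≤ mΩ := by
    intro i; fin_cases i <;> assumption
  simpa [iSup_insert] using indep_iSup_of_disjoint h_le h (S := {0, 2}) (T := {1}) (by simp)

theorem iIndep.swap_fin_three (h : iIndep ![m₁, m₂, m₃] μ) : iIndep ![m₂, m₁, m₃] μ := by
  convert h.precomp (Equiv.swap (0 : Fin 3) 1).injective using 1
  ext i : 1
  fin_cases i <;> rfl

end ProbabilityTheory

theorem iterated_condexp_overlapping_information_general
    {Ω : Type*} {mΩ : MeasurableSpace Ω} {μ : Measure Ω} [IsProbabilityMeasure μ]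
    (𝒜 ℬ 𝒞 : MeasurableSpace Ω)
    (h𝒜 : 𝒜 ≤ mΩ) (hℬ : ℬ ≤ mΩ) (h𝒞 : 𝒞 ≤ mΩ)
    (hindep : ProbabilityTheory.iIndep ![𝒜, ℬ, 𝒞] μ)
    (ξ : Ω → ℝ) :
    μ[ μ[ξ | 𝒜 ⊔ 𝒞] | ℬ ⊔ 𝒞] =ᵐ[μ] μ[ξ | 𝒞]
      ∧ μ[ μ[ξ | ℬ ⊔ 𝒞] | 𝒜 ⊔ 𝒞] =ᵐ[μ] μ[ξ | 𝒞] :=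
  ⟨condExp_condExp_sup_eq_condExp_of_indep h𝒜 hℬ h𝒞
      (hindep.indep_sup_of_fin_three h𝒜 hℬ h𝒞) ξ,
    condExp_condExp_sup_eq_condExp_of_indep hℬ h𝒜 h𝒞
      (hindep.swap_fin_three.indep_sup_of_fin_three hℬ h𝒜 h𝒞) ξ⟩

/-- For overlapping information σ-algebras `𝒢¹ = 𝒜 ⊔ 𝒞` and
`𝒢² = ℬ ⊔ 𝒞` built from mutually independent σ-algebras `𝒜, ℬ, 𝒞`, the iterated
conditional expectations of an integrable random variable `ξ` agree and equal the
conditional expectation on the common information `𝒞`: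
`𝔼[𝔼[ξ | 𝒢¹] | 𝒢²] = 𝔼[ξ | 𝒞] = 𝔼[𝔼[ξ | 𝒢²] | 𝒢¹]` a.s. -/
theorem iterated_condexp_overlapping_information
    {Ω : Type*} {mΩ : MeasurableSpace Ω} {μ : Measure Ω} [IsProbabilityMeasure μ]
    (𝒜 ℬ 𝒞 : MeasurableSpace Ω)
    (h𝒜 : 𝒜 ≤ mΩ) (hℬ : ℬ ≤ mΩ) (h𝒞 : 𝒞 ≤ mΩ)
    (hindep : ProbabilityTheory.iIndep ![𝒜, ℬ, 𝒞] μ)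
    (ξ : Ω → ℝ) (hξ : Integrable ξ μ) :
    μ[ μ[ξ | 𝒜 ⊔ 𝒞] | ℬ ⊔ 𝒞] =ᵐ[μ] μ[ξ | 𝒞]
      ∧ μ[ μ[ξ | ℬ ⊔ 𝒞] | 𝒜 ⊔ 𝒞] =ᵐ[μ] μ[ξ | 𝒞] :=
  iterated_condexp_overlapping_information_general 𝒜 ℬ 𝒞 h𝒜 hℬ h𝒞 hindep ξ
end

section
/- Let X be an integrable ℝⁿ-valued random vector and write X̂ := 𝔼[X | 𝒢¹], X̌ := 𝔼[X | 𝒢²], X̌̂ := 𝔼[X̂ | 𝒢²] (all componentwise). For real m×n matrices P₁, P₂, P₃, P₄ define Y := P₁X + P₂X̂ + P₃X̌ + P₄X̌̂. Then ℙ-almost surely: 𝔼[Y | 𝒢¹] = (P₁ + P₂)X̂ + (P₃ + P₄)X̌̂, 𝔼[Y | 𝒢²] = (P₁ + P₃)X̌ + (P₂ + P₄)X̌̂, and 𝔼[𝔼[Y | 𝒢¹] | 𝒢²] = (P₁ + P₂ + P₃ + P₄)X̌̂. (These are the paper's filtering relations (for Ŷ, Y̌ and Y̌̂) used to decouple the leaders'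 optimality system.) -/
/-!
If `𝒜` is independent of `ℬ ⊔ 𝒞` and `Z` is `ℬ ⊔ 𝒞`-measurable, then `𝔼[Z | 𝒜 ⊔ 𝒞] = 𝔼[Z | 𝒞]`:
both sides have the same integral over every `A ∩ C`, namely `ℙ(A) ∫_C Z`, and these sets form a
π-system generating `𝒜 ⊔ 𝒞`. Hence `𝔼[X̌ | 𝒢¹] = 𝔼[X | 𝒞] = 𝔼[X̂ | 𝒢²] = X̌̂`, so `X̌̂` is, up to a
null set, measurable for both `𝒢¹` and `𝒢²`. The three relations then follow by linearity of
the conditional expectation.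
-/

open MeasureTheory ProbabilityTheory Filter Set

section SetIntegral

variable {Ω E : Type*} {mΩ : MeasurableSpace Ω} {μ : Measure Ω}
  [NormedAddCommGroup E] [NormedSpace ℝ E]

theorem setIntegral_eq_of_isPiSystem {m : MeasurableSpace Ω} (hm : m ≤ mΩ) {C : Set (Set Ω)}
    (hgen : m = MeasurableSpace.generateFrom C) (hC : IsPiSystem C) {f g : Ω → E}
    (hf : Integrable f μ) (hg : Integrable g μ) (h_univ : ∫ x, f x ∂μ = ∫ x, g x ∂μ)
    (h_basic : ∀ s ∈ C, ∫ x in s, f x ∂μ = ∫ x in s, g x ∂μ) {s : Set Ω}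
    (hs : MeasurableSet[m] s) : ∫ x in s, f x ∂μ = ∫ x in s, g x ∂μ := by
  have h_trim : (μ.withDensityᵥ f).trim hm = (μ.withDensityᵥ g).trim hm := by
    refine VectorMeasure.ext_of_generateFrom C (fun t ht => ?_) hgen hC ?_
    · have ht' : MeasurableSet[m] t := hgen ▸ MeasurableSpace.measurableSet_generateFrom ht
      simpa [VectorMeasure.trim_measurableSet_eq hm ht', withDensityᵥ_apply hf (hm _ ht'),
        withDensityᵥ_apply hg (hm _ ht')] using h_basic t ht
    · simpa [VectorMeasure.trim_measurableSet_eq hm MeasurableSet.univ,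
        withDensityᵥ_apply hf MeasurableSet.univ, withDensityᵥ_apply hg MeasurableSet.univ]
        using h_univ
  simpa [VectorMeasure.trim_measurableSet_eq hm hs, withDensityᵥ_apply hf (hm _ hs),
    withDensityᵥ_apply hg (hm _ hs)] using congrArg (fun v => v s) h_trim

end SetIntegral

namespace MeasurableSpace

variable {Ω : Type*}

theorem isPiSystem_image2_inter (m₁ m₂ : MeasurableSpace Ω) :
    IsPiSystem (image2 (· ∩ ·) {s | MeasurableSet[m₁] s} {s | MeasurableSet[m₂] s}) := by
  rintro _ ⟨A₁, hA₁, C₁, hC₁, rfl⟩ _ ⟨A₂, hA₂, C₂, hC₂, rfl⟩ -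
  exact ⟨A₁ ∩ A₂, hA₁.inter hA₂, C₁ ∩ C₂, hC₁.inter hC₂, inter_inter_inter_comm _ _ _ _⟩

theorem generateFrom_image2_inter (m₁ m₂ : MeasurableSpace Ω) :
    generateFrom (image2 (· ∩ ·) {s | MeasurableSet[m₁] s} {s | MeasurableSet[m₂] s}) =
      m₁ ⊔ m₂ := by
  refine le_antisymm (generateFrom_le ?_) (sup_le (fun s hs => ?_) (fun s hs => ?_))
  · rintro _ ⟨A, hA, C, hC, rfl⟩
    exact (le_sup_left (a := m₁) _ hA).inter (le_sup_right (b := m₂) _ hC)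
  · exact measurableSet_generateFrom ⟨s, hs, univ, MeasurableSet.univ, inter_univ s⟩
  · exact measurableSet_generateFrom ⟨univ, MeasurableSet.univ, s, hs, univ_inter s⟩

end MeasurableSpace

section Indep

variable {Ω E : Type*} {mΩ : MeasurableSpace Ω} {μ : Measure Ω}
  [NormedAddCommGroup E] [NormedSpace ℝ E] [CompleteSpace E]

theorem setIntegral_inter_eq_smul_of_indep [IsFiniteMeasure μ] {m₁ m₂ : MeasurableSpace Ω}
    (hm₁ : m₁ ≤ mΩ) (hm₂ : m₂ ≤ mΩ) (hind : Indep m₁ m₂ μ) {f : Ω → E}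
    (hf : StronglyMeasurable[m₂] f) (hfi : Integrable f μ) {A C : Set Ω}
    (hA : MeasurableSet[m₁] A) (hC : MeasurableSet[m₂] C) :
    ∫ x in A ∩ C, f x ∂μ = μ.real A • ∫ x in C, f x ∂μ := by
  have h_indep : μ[C.indicator f | m₁] =ᵐ[μ] fun _ => ∫ x, C.indicator f x ∂μ :=
    condExp_indep_eq hm₂ hm₁ (hf.indicator hC) hind.symm
  calc ∫ x in A ∩ C, f x ∂μ = ∫ x in A, C.indicator f x ∂μ := by
        rw [setIntegral_indicator (hm₂ _ hC)]
    _ = ∫ x in A, μ[C.indicator f | m₁] x ∂μ :=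
        (setIntegral_condExp hm₁ (hfi.indicator (hm₂ _ hC)) hA).symm
    _ = μ.real A • ∫ x in C, f x ∂μ := by
        rw [setIntegral_congr_ae (hm₁ _ hA) (h_indep.mono fun x hx _ => hx), setIntegral_const,
          integral_indicator (hm₂ _ hC)]

theorem condExp_sup_eq_of_indep [IsFiniteMeasure μ] {m₁ m₂ m₃ : MeasurableSpace Ω}
    (hm₁ : m₁ ≤ mΩ) (hm₂ : m₂ ≤ mΩ) (h₃₂ : m₃ ≤ m₂) (hind : Indep m₁ m₂ μ) {f : Ω → E}
    (hf : StronglyMeasurable[m₂] f) (hfi : Integrable f μ) :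
    μ[f | m₁ ⊔ m₃] =ᵐ[μ] μ[f | m₃] := by
  have hm₃ : m₃ ≤ mΩ := h₃₂.trans hm₂
  have hsup : m₁ ⊔ m₃ ≤ mΩ := sup_le hm₁ hm₃
  refine (ae_eq_condExp_of_forall_setIntegral_eq hsup hfi
    (fun s _ _ => integrable_condExp.integrableOn) (fun s hs _ => ?_)
    (stronglyMeasurable_condExp.mono (le_sup_right : m₃ ≤ m₁ ⊔ m₃)).aestronglyMeasurable).symm
  refine setIntegral_eq_of_isPiSystem hsup (MeasurableSpace.generateFrom_image2_inter m₁ m₃).symm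
    (MeasurableSpace.isPiSystem_image2_inter m₁ m₃) integrable_condExp hfi (integral_condExp hm₃)
    ?_ hs
  rintro _ ⟨A, hA, C, hC, rfl⟩
  rw [setIntegral_inter_eq_smul_of_indep hm₁ hm₂ hind (stronglyMeasurable_condExp.mono h₃₂)
      integrable_condExp hA (h₃₂ _ hC),
    setIntegral_inter_eq_smul_of_indep hm₁ hm₂ hind hf hfi hA (h₃₂ _ hC),
    setIntegral_condExp hm₃ hfi hC]

theorem condExp_condExp_sup_eq_of_indep [IsFiniteMeasure μ] {m₁ m₂ m₃ : MeasurableSpace Ω}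
    (hm₁ : m₁ ≤ mΩ) (hm₂ : m₂ ≤ mΩ) (hm₃ : m₃ ≤ mΩ) (hind : Indep m₁ (m₂ ⊔ m₃) μ)
    (f : Ω → E) : μ[μ[f | m₂ ⊔ m₃] | m₁ ⊔ m₃] =ᵐ[μ] μ[f | m₃] :=
  (condExp_sup_eq_of_indep hm₁ (sup_le hm₂ hm₃) le_sup_right hind stronglyMeasurable_condExp
    integrable_condExp).trans (condExp_condExp_of_le le_sup_right (sup_le hm₂ hm₃))

theorem ProbabilityTheory.iIndep.indep_sup {ι : Type*} {m : ι → MeasurableSpace Ω}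
    (h_le : ∀ i, m i ≤ mΩ) (h : iIndep m μ) {i j k : ι} (hij : i ≠ j) (hik : i ≠ k) :
    Indep (m i) (m j ⊔ m k) μ := by
  have h_disj := indep_iSup_of_disjoint h_le h (S := {i}) (T := {j, k}) (by simp [hij, hik])
  rwa [iSup_singleton, iSup_insert, iSup_singleton] at h_disj

end Indep

section MulVec

variable {Ω ι ι' : Type*} {mΩ : MeasurableSpace Ω} {μ : Measure Ω} [Fintype ι] [Fintype ι']
  {m : MeasurableSpace Ω}

theorem condExp_sum_mulVec {κ : Type*} [Fintype κ] (P : κ → Matrix ι' ι ℝ)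
    {f g : κ → Ω → ι → ℝ} (hf : ∀ k, Integrable (f k) μ) (hfg : ∀ k, μ[f k | m] =ᵐ[μ] g k) :
    μ[fun ω => ∑ k, (P k).mulVec (f k ω) | m] =ᵐ[μ] fun ω => ∑ k, (P k).mulVec (g k ω) := by
  let T : κ → (ι → ℝ) →L[ℝ] (ι' → ℝ) := fun k => (P k).mulVecLin.toContinuousLinearMap
  have h_sum : (fun ω => ∑ k, (P k).mulVec (f k ω)) = ∑ k, T k ∘ f k := by ext; simp [T]
  have h_comm : ∀ k, μ[T k ∘ f k | m] =ᵐ[μ] T k ∘ g k :=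
    fun k => ((T k).comp_condExp_comm (hf k)).symm.trans ((hfg k).fun_comp (T k))
  rw [h_sum]
  filter_upwards [condExp_finsetSum (s := Finset.univ) (f := fun k => T k ∘ f k)
      (fun k _ => (T k).integrable_comp (hf k)) m, ae_all_iff.2 h_comm] with ω h_lin h_eq
  rw [h_lin, Finset.sum_apply]
  exact Finset.sum_congr rfl fun k _ => h_eq k

theorem condExp_mulVec_add_mulVec (P₁ P₂ : Matrix ι' ι ℝ) {f₁ f₂ g₁ g₂ : Ω → ι → ℝ}
    (hf₁ : Integrable f₁ μ) (hf₂ : Integrable f₂ μ)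
    (h₁ : μ[f₁ | m] =ᵐ[μ] g₁) (h₂ : μ[f₂ | m] =ᵐ[μ] g₂) :
    μ[fun ω => P₁.mulVec (f₁ ω) + P₂.mulVec (f₂ ω) | m] =ᵐ[μ]
      fun ω => P₁.mulVec (g₁ ω) + P₂.mulVec (g₂ ω) := by
  simpa [Fin.sum_univ_two] using condExp_sum_mulVec ![P₁, P₂] (f := ![f₁, f₂]) (g := ![g₁, g₂])
    (Fin.forall_fin_two.2 ⟨hf₁, hf₂⟩) (Fin.forall_fin_two.2 ⟨h₁, h₂⟩)

theorem condExp_mulVec_add_mulVec_add_mulVec_add_mulVec (P₁ P₂ P₃ P₄ : Matrix ι' ι ℝ)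
    {f₁ f₂ f₃ f₄ g₁ g₂ g₃ g₄ : Ω → ι → ℝ} (hf₁ : Integrable f₁ μ) (hf₂ : Integrable f₂ μ)
    (hf₃ : Integrable f₃ μ) (hf₄ : Integrable f₄ μ) (h₁ : μ[f₁ | m] =ᵐ[μ] g₁)
    (h₂ : μ[f₂ | m] =ᵐ[μ] g₂) (h₃ : μ[f₃ | m] =ᵐ[μ] g₃) (h₄ : μ[f₄ | m] =ᵐ[μ] g₄) :
    μ[fun ω => P₁.mulVec (f₁ ω) + P₂.mulVec (f₂ ω) + P₃.mulVec (f₃ ω) + P₄.mulVec (f₄ ω) | m]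
      =ᵐ[μ] fun ω => P₁.mulVec (g₁ ω) + P₂.mulVec (g₂ ω) + P₃.mulVec (g₃ ω) + P₄.mulVec (g₄ ω) := by
  simpa [Fin.sum_univ_four] using condExp_sum_mulVec ![P₁, P₂, P₃, P₄]
    (f := ![f₁, f₂, f₃, f₄]) (g := ![g₁, g₂, g₃, g₄])
    (Fin.forall_fin_succ.2 ⟨hf₁, Fin.forall_fin_succ.2 ⟨hf₂, Fin.forall_fin_two.2 ⟨hf₃, hf₄⟩⟩⟩)
    (Fin.forall_fin_succ.2 ⟨h₁, Fin.forall_fin_succ.2 ⟨h₂, Fin.forall_fin_two.2 ⟨h₃, h₄⟩⟩⟩)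

end MulVec

/-- Filtering relations for the leaders' decoupling. With
`X̂ = 𝔼[X | 𝒢¹]`, `X̌ = 𝔼[X | 𝒢²]`, `X̌̂ = 𝔼[X̂ | 𝒢²]` and
`Y = P₁X + P₂X̂ + P₃X̌ + P₄X̌̂`, one has ℙ-a.s.
`𝔼[Y | 𝒢¹] = (P₁+P₂)X̂ + (P₃+P₄)X̌̂`, `𝔼[Y | 𝒢²] = (P₁+P₃)X̌ + (P₂+P₄)X̌̂`, and
`𝔼[𝔼[Y | 𝒢¹] | 𝒢²] = (P₁+P₂+P₃+P₄)X̌̂`. -/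
theorem filtering_relations_for_Y
    {Ω : Type*} {mΩ : MeasurableSpace Ω} {μ : Measure Ω} [IsProbabilityMeasure μ]
    (𝒜 ℬ 𝒞 : MeasurableSpace Ω)
    (h𝒜 : 𝒜 ≤ mΩ) (hℬ : ℬ ≤ mΩ) (h𝒞 : 𝒞 ≤ mΩ)
    (hindep : ProbabilityTheory.iIndep ![𝒜, ℬ, 𝒞] μ)
    (n m : ℕ) (X : Ω → (Fin n → ℝ)) (hX : Integrable X μ)
    (P₁ P₂ P₃ P₄ : Matrix (Fin m) (Fin n) ℝ)
    (Xhat Xcheck Xcheckhat : Ω → (Fin n → ℝ)) (Y : Ω → (Fin m → ℝ))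
    (hXhat : Xhat = μ[X | 𝒜 ⊔ 𝒞])
    (hXcheck : Xcheck = μ[X | ℬ ⊔ 𝒞])
    (hXcheckhat : Xcheckhat = μ[Xhat | ℬ ⊔ 𝒞])
    (hY : Y = fun ω =>
      P₁.mulVec (X ω) + P₂.mulVec (Xhat ω) + P₃.mulVec (Xcheck ω) + P₄.mulVec (Xcheckhat ω)) :
    (μ[Y | 𝒜 ⊔ 𝒞] =ᵐ[μ] fun ω =>
        (P₁ + P₂).mulVec (Xhat ω) + (P₃ + P₄).mulVec (Xcheckhat ω))
      ∧ (μ[Y | ℬ ⊔ 𝒞] =ᵐ[μ] fun ω =>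
        (P₁ + P₃).mulVec (Xcheck ω) + (P₂ + P₄).mulVec (Xcheckhat ω))
      ∧ (μ[ (μ[Y | 𝒜 ⊔ 𝒞]) | ℬ ⊔ 𝒞] =ᵐ[μ] fun ω =>
        (P₁ + P₂ + P₃ + P₄).mulVec (Xcheckhat ω)) := by
  subst hY hXcheckhat hXcheck hXhat
  set Xhat := μ[X | 𝒜 ⊔ 𝒞]
  set Xcheck := μ[X | ℬ ⊔ 𝒞]
  set Xcheckhat := μ[Xhat | ℬ ⊔ 𝒞]
  have hG₁ : 𝒜 ⊔ 𝒞 ≤ mΩ := sup_le h𝒜 h𝒞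
  have hG₂ : ℬ ⊔ 𝒞 ≤ mΩ := sup_le hℬ h𝒞
  have hle : ∀ i, ![𝒜, ℬ, 𝒞] i ≤ mΩ := Fin.forall_fin_succ.2 ⟨h𝒜, Fin.forall_fin_two.2 ⟨hℬ, h𝒞⟩⟩
  have hcheck_G₁ : μ[Xcheck | 𝒜 ⊔ 𝒞] =ᵐ[μ] μ[X | 𝒞] :=
    condExp_condExp_sup_eq_of_indep h𝒜 hℬ h𝒞
      (hindep.indep_sup hle (i := 0) (j := 1) (k := 2) (by decide) (by decide)) X
  have hcheckhat : Xcheckhat =ᵐ[μ] μ[X | 𝒞] :=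
    condExp_condExp_sup_eq_of_indep hℬ h𝒜 h𝒞
      (hindep.indep_sup hle (i := 1) (j := 0) (k := 2) (by decide) (by decide)) X
  have hcheckhat_G₁ : μ[Xcheckhat | 𝒜 ⊔ 𝒞] =ᵐ[μ] Xcheckhat :=
    condExp_of_aestronglyMeasurable' hG₁
      ⟨_, stronglyMeasurable_condExp.mono le_sup_right, hcheckhat⟩ integrable_condExp
  have h_G₁ := condExp_mulVec_add_mulVec_add_mulVec_add_mulVec P₁ P₂ P₃ P₄
    (f₂ := Xhat) (f₃ := Xcheck) (f₄ := Xcheckhat) hX integrable_condExp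
    integrable_condExp integrable_condExp EventuallyEq.rfl (condExp_condExp_of_le le_rfl hG₁)
    (hcheck_G₁.trans hcheckhat.symm) hcheckhat_G₁
  have h_G₂ := condExp_mulVec_add_mulVec_add_mulVec_add_mulVec P₁ P₂ P₃ P₄
    (f₂ := Xhat) (f₃ := Xcheck) (f₄ := Xcheckhat) hX integrable_condExp
    integrable_condExp integrable_condExp EventuallyEq.rfl EventuallyEq.rfl
    (condExp_condExp_of_le le_rfl hG₂) (condExp_condExp_of_le le_rfl hG₂)
  have h_G₁G₂ := condExp_mulVec_add_mulVec (P₁ + P₂) (P₃ + P₄) (f₁ := Xhat) (f₂ := Xcheckhat)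
    integrable_condExp integrable_condExp EventuallyEq.rfl (condExp_condExp_of_le le_rfl hG₂)
  refine ⟨h_G₁.trans (.of_eq ?_), h_G₂.trans (.of_eq ?_),
    (condExp_congr_ae (h_G₁.trans (.of_eq ?_))).trans (h_G₁G₂.trans (.of_eq ?_))⟩ <;>
  · ext ω : 1
    simp only [Matrix.add_mulVec]
    abel
end

section
/- (Lemma 3.1, solvability of the coupled Riccati system under symmetry.) Suppose the summed Riccati equation P̃' (t) + 2a₀(t)P̃(t) + (Σᵢ₌₁³ aᵢ(t)²)P̃(t) + Q₁(t) + Q₂(t) + B̄₁(t)P̃(t)² / (R(t) + S(t)P̃(t)) = 0 on [0,T], with P̃(T) = G₁ + G₂ and R(t) + S(t)P̃(t) > 0 for all t ∈ [0,T], admits a unique C¹ solution P̃. Then the coupled Riccati system P_j'(t) + 2a₀(t)P_j(t) + (Σᵢ₌₁³ aᵢ(t)²)P_j(t) + Q_j(t) + B̄₁(t)P_j(t)(P₁(t) + P₂(t)) / (R(t) + S(t)(P₁(t) + P₂(t))) = 0 for j = 1, 2, with terminal conditions P_j(T) = G_j, admits exactly one admissible solution pair (P₁, P₂), i.e. exactly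 one pair of C¹ functions on [0,T] satisfying these equations with R(t) + S(t)(P₁(t) + P₂(t)) > 0 for all t ∈ [0,T]. -/
/-! Adding the two equations shows that `P₁ + P₂` solves the summed equation, hence equals `P̃`.
Once `P₁ + P₂ = P̃` is known, the first equation is linear in `P₁`:
`P₁' = -(α P₁ + Q₁)` with the continuous coefficient `α = 2a₀ + Σ aᵢ² + B̄₁P̃ / (R + SP̃)`.
That terminal value problem has exactly one solution (variation of constants for existence,
the integrating factor `exp ∫ α` for uniqueness), and `P₂ = P̃ - P₁`. -/

open Set

/-- `B̄₁(t) = b₀(t) + Σᵢ₌₁³ aᵢ(t)bᵢ(t)`. -/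
noncomputable def Bbar1 (a₁ a₂ a₃ b₀ b₁ b₂ b₃ : ℝ → ℝ) : ℝ → ℝ :=
  fun t => b₀ t + (a₁ t * b₁ t + a₂ t * b₂ t + a₃ t * b₃ t)

/-- `S(t) = Σᵢ₌₁³ bᵢ(t)²`. -/
noncomputable def Ssum (b₁ b₂ b₃ : ℝ → ℝ) : ℝ → ℝ :=
  fun t => b₁ t ^ 2 + b₂ t ^ 2 + b₃ t ^ 2

/-- `P` (with derivative `Pd`) is a C¹ solution on `[0,T]` of the summed Riccati
equation `P̃' + 2a₀P̃ + (Σᵢ aᵢ²)P̃ + Q₁ + Q₂ + B̄₁P̃²/(R + SP̃) = 0`, `P̃(T) = G₁ + G₂`,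
with `R + SP̃ > 0` on `[0,T]`. -/
def SummedRiccatiSol (T : ℝ) (a₀ a₁ a₂ a₃ Q₁ Q₂ R Bbar S : ℝ → ℝ) (G₁ G₂ : ℝ)
    (P Pd : ℝ → ℝ) : Prop :=
  (∀ t ∈ Icc (0 : ℝ) T, HasDerivWithinAt P (Pd t) (Icc (0 : ℝ) T) t) ∧
  ContinuousOn Pd (Icc (0 : ℝ) T) ∧
  (∀ t ∈ Icc (0 : ℝ) T,
    Pd t + 2 * a₀ t * P t + (a₁ t ^ 2 + a₂ t ^ 2 + a₃ t ^ 2) * P t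
      + Q₁ t + Q₂ t + Bbar t * P t ^ 2 / (R t + S t * P t) = 0) ∧
  P T = G₁ + G₂ ∧
  (∀ t ∈ Icc (0 : ℝ) T, 0 < R t + S t * P t)

/-- `(P₁, P₂)` (with derivatives `P₁d, P₂d`) is an admissible C¹ solution pair on `[0,T]`
of the coupled Riccati system `P_j' + 2a₀P_j + (Σᵢ aᵢ²)P_j + Q_j
+ B̄₁P_j(P₁+P₂)/(R + S(P₁+P₂)) = 0`, `P_j(T) = G_j`, j = 1,2,
with `R + S(P₁+P₂) > 0` on `[0,T]`. -/
def CoupledRiccatiSol (T : ℝ) (a₀ a₁ a₂ a₃ Q₁ Q₂ R Bbar S : ℝ → ℝ) (G₁ G₂ : ℝ)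
    (P₁ P₂ P₁d P₂d : ℝ → ℝ) : Prop :=
  (∀ t ∈ Icc (0 : ℝ) T, HasDerivWithinAt P₁ (P₁d t) (Icc (0 : ℝ) T) t) ∧
  (∀ t ∈ Icc (0 : ℝ) T, HasDerivWithinAt P₂ (P₂d t) (Icc (0 : ℝ) T) t) ∧
  ContinuousOn P₁d (Icc (0 : ℝ) T) ∧ ContinuousOn P₂d (Icc (0 : ℝ) T) ∧
  (∀ t ∈ Icc (0 : ℝ) T,
    P₁d t + 2 * a₀ t * P₁ t + (a₁ t ^ 2 + a₂ t ^ 2 + a₃ t ^ 2) * P₁ t + Q₁ t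
      + Bbar t * P₁ t * (P₁ t + P₂ t) / (R t + S t * (P₁ t + P₂ t)) = 0) ∧
  (∀ t ∈ Icc (0 : ℝ) T,
    P₂d t + 2 * a₀ t * P₂ t + (a₁ t ^ 2 + a₂ t ^ 2 + a₃ t ^ 2) * P₂ t + Q₂ t
      + Bbar t * P₂ t * (P₁ t + P₂ t) / (R t + S t * (P₁ t + P₂ t)) = 0) ∧
  P₁ T = G₁ ∧ P₂ T = G₂ ∧
  (∀ t ∈ Icc (0 : ℝ) T, 0 < R t + S t * (P₁ t + P₂ t))

/-- `P` (with derivative `Pd`) is a C¹ solution on `[0,T]` of the linear auxiliary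
terminal-value ODE `P' + 2a₀P + (Σᵢ aᵢ²)P + Qj + B̄₁P·P̃/(R + SP̃) = 0`, `P(T) = Gj`,
obtained by freezing the nonlinearity at a given `P̃`. -/
def AuxLinearSol (T : ℝ) (a₀ a₁ a₂ a₃ Qj R Bbar S Ptilde : ℝ → ℝ) (Gj : ℝ)
    (P Pd : ℝ → ℝ) : Prop :=
  (∀ t ∈ Icc (0 : ℝ) T, HasDerivWithinAt P (Pd t) (Icc (0 : ℝ) T) t) ∧
  ContinuousOn Pd (Icc (0 : ℝ) T) ∧
  (∀ t ∈ Icc (0 : ℝ) T,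
    Pd t + 2 * a₀ t * P t + (a₁ t ^ 2 + a₂ t ^ 2 + a₃ t ^ 2) * P t + Qj t
      + Bbar t * P t * Ptilde t / (R t + S t * Ptilde t) = 0) ∧
  P T = Gj

open Real intervalIntegral

theorem ContinuousOn.exists_continuous_eqOn_Icc {X Y : Type*} [LinearOrder X] [TopologicalSpace X]
    [OrderTopology X] [TopologicalSpace Y] {a b : X} {f : X → Y} (hab : a ≤ b)
    (hf : ContinuousOn f (Icc a b)) : ∃ g : X → Y, Continuous g ∧ EqOn g f (Icc a b) :=
  ⟨fun t => f (projIcc a b hab t),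
    hf.comp_continuous (continuous_subtype_val.comp continuous_projIcc)
      fun t => (projIcc a b hab t).2,
    fun t ht => by simp only [projIcc_of_mem hab ht]⟩

section LinearODE

variable {α q y z : ℝ → ℝ} {a b : ℝ}

/-- Variation of constants for `y' = -(α y + q)`, `y b = G`. -/
noncomputable def linearTerminalSol (α q : ℝ → ℝ) (b G t : ℝ) : ℝ :=
  exp (-∫ s in b..t, α s) * (G + ∫ s in t..b, exp (∫ u in b..s, α u) * q s)

theorem linearTerminalSol_self (α q : ℝ → ℝ) (b G : ℝ) : linearTerminalSol α q b G b = G := by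
  rw [linearTerminalSol]
  simp

theorem hasDerivAt_linearTerminalSol (hα : Continuous α) (hq : Continuous q) (b G t : ℝ) :
    HasDerivAt (linearTerminalSol α q b G) (-(α t * linearTerminalSol α q b G t + q t)) t := by
  have hI : ∀ u, HasDerivAt (fun v => ∫ s in b..v, α s) (α u) u := fun u =>
    (hα.integral_hasStrictDerivAt b u).hasDerivAt
  have hφ : Continuous fun s => exp (∫ u in b..s, α u) * q s :=
    (continuous_exp.comp (continuous_iff_continuousAt.2 fun u => (hI u).continuousAt)).mul hq
  have hJ := integral_hasDerivAt_left (hφ.intervalIntegrable t b)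
    (hφ.stronglyMeasurableAtFilter _ _) hφ.continuousAt
  have hinv : exp (-∫ s in b..t, α s) * exp (∫ s in b..t, α s) = 1 := by
    rw [← exp_add, neg_add_cancel, exp_zero]
  refine ((hI t).neg.exp.mul (hJ.const_add G)).congr_deriv ?_
  rw [linearTerminalSol, Pi.neg_apply]
  linear_combination -q t * hinv

theorem exists_hasDerivWithinAt_linear_terminal (hab : a ≤ b) (hα : ContinuousOn α (Icc a b))
    (hq : ContinuousOn q (Icc a b)) (G : ℝ) :
    ∃ y : ℝ → ℝ, (∀ t ∈ Icc a b, HasDerivWithinAt y (-(α t * y t + q t)) (Icc a b) t) ∧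
      y b = G := by
  obtain ⟨α', hα', hαα'⟩ := hα.exists_continuous_eqOn_Icc hab
  obtain ⟨q', hq', hqq'⟩ := hq.exists_continuous_eqOn_Icc hab
  refine ⟨linearTerminalSol α' q' b G, fun t ht => ?_, linearTerminalSol_self α' q' b G⟩
  rw [← hαα' ht, ← hqq' ht]
  exact (hasDerivAt_linearTerminalSol hα' hq' b G t).hasDerivWithinAt

theorem eqOn_of_hasDerivWithinAt_linear_terminal (hα : ContinuousOn α (Icc a b))
    (hy : ∀ t ∈ Icc a b, HasDerivWithinAt y (-(α t * y t + q t)) (Icc a b) t)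
    (hz : ∀ t ∈ Icc a b, HasDerivWithinAt z (-(α t * z t + q t)) (Icc a b) t)
    (hb : y b = z b) : EqOn y z (Icc a b) := by
  intro t ht
  have hab : a ≤ b := ht.1.trans ht.2
  obtain ⟨α', hα', hαα'⟩ := hα.exists_continuous_eqOn_Icc hab
  set w : ℝ → ℝ := fun u => exp (∫ s in b..u, α' s) * (y u - z u)
  have hw : ∀ u ∈ Icc a b, HasDerivWithinAt w 0 (Icc a b) u := fun u hu => by
    refine ((hα'.integral_hasStrictDerivAt b u).hasDerivAt.exp.hasDerivWithinAt.mul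
      ((hy u hu).sub (hz u hu))).congr_deriv ?_
    rw [hαα' hu, Pi.sub_apply]
    ring
  have hwt := (convex_Icc a b).norm_image_sub_le_of_norm_hasDerivWithin_le hw
    (fun _ _ => norm_zero.le) (right_mem_Icc.2 hab) ht
  simpa only [w, hb, sub_self, mul_zero, zero_mul, sub_zero, norm_eq_abs, abs_nonpos_iff,
    mul_eq_zero, exp_ne_zero, false_or, sub_eq_zero] using hwt

end LinearODE

section Riccati

variable {T : ℝ} {a₀ a₁ a₂ a₃ Q₁ Q₂ Qj R Bbar S Pt Ptd P P' Pd Pd' P₁ P₂ P₁d P₂d : ℝ → ℝ}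
  {G₁ G₂ Gj : ℝ}

noncomputable def frozenCoeff (a₀ a₁ a₂ a₃ R Bbar S Pt : ℝ → ℝ) (t : ℝ) : ℝ :=
  2 * a₀ t + (a₁ t ^ 2 + a₂ t ^ 2 + a₃ t ^ 2) + Bbar t * Pt t / (R t + S t * Pt t)

theorem continuousOn_frozenCoeff {s : Set ℝ} (ha₀ : ContinuousOn a₀ s) (ha₁ : ContinuousOn a₁ s)
    (ha₂ : ContinuousOn a₂ s) (ha₃ : ContinuousOn a₃ s) (hR : ContinuousOn R s)
    (hBbar : ContinuousOn Bbar s) (hS : ContinuousOn S s) (hPt : ContinuousOn Pt s)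
    (hden : ∀ t ∈ s, R t + S t * Pt t ≠ 0) :
    ContinuousOn (frozenCoeff a₀ a₁ a₂ a₃ R Bbar S Pt) s := by
  unfold frozenCoeff
  fun_prop (disch := exact hden)

theorem AuxLinearSol.hasDerivWithinAt (h : AuxLinearSol T a₀ a₁ a₂ a₃ Qj R Bbar S Pt Gj P Pd) :
    ∀ t ∈ Icc 0 T, HasDerivWithinAt P
      (-(frozenCoeff a₀ a₁ a₂ a₃ R Bbar S Pt t * P t + Qj t)) (Icc 0 T) t := fun t ht =>
  (h.1 t ht).congr_deriv (by rw [frozenCoeff]; linear_combination h.2.2.1 t ht)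

theorem AuxLinearSol.eqOn (hc : ContinuousOn (frozenCoeff a₀ a₁ a₂ a₃ R Bbar S Pt) (Icc 0 T))
    (h : AuxLinearSol T a₀ a₁ a₂ a₃ Qj R Bbar S Pt Gj P Pd)
    (h' : AuxLinearSol T a₀ a₁ a₂ a₃ Qj R Bbar S Pt Gj P' Pd') : EqOn P P' (Icc 0 T) :=
  eqOn_of_hasDerivWithinAt_linear_terminal hc h.hasDerivWithinAt h'.hasDerivWithinAt
    (h.2.2.2.trans h'.2.2.2.symm)

theorem exists_auxLinearSol (hT : 0 ≤ T)
    (hc : ContinuousOn (frozenCoeff a₀ a₁ a₂ a₃ R Bbar S Pt) (Icc 0 T))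
    (hQ : ContinuousOn Qj (Icc 0 T)) (Gj : ℝ) :
    ∃ P Pd, AuxLinearSol T a₀ a₁ a₂ a₃ Qj R Bbar S Pt Gj P Pd := by
  obtain ⟨P, hP, hPT⟩ := exists_hasDerivWithinAt_linear_terminal hT hc hQ Gj
  have hPc : ContinuousOn P (Icc 0 T) := fun t ht => (hP t ht).continuousWithinAt
  refine ⟨P, fun t => -(frozenCoeff a₀ a₁ a₂ a₃ R Bbar S Pt t * P t + Qj t), hP,
    ((hc.mul hPc).add hQ).neg, fun t _ => ?_, hPT⟩
  simp only [frozenCoeff]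
  ring

theorem CoupledRiccatiSol.summedRiccatiSol_add
    (h : CoupledRiccatiSol T a₀ a₁ a₂ a₃ Q₁ Q₂ R Bbar S G₁ G₂ P₁ P₂ P₁d P₂d) :
    SummedRiccatiSol T a₀ a₁ a₂ a₃ Q₁ Q₂ R Bbar S G₁ G₂ (P₁ + P₂) (P₁d + P₂d) := by
  obtain ⟨hP₁, hP₂, hP₁d, hP₂d, heq₁, heq₂, hP₁T, hP₂T, hpos⟩ := h
  refine ⟨fun t ht => (hP₁ t ht).add (hP₂ t ht), hP₁d.add hP₂d, fun t ht => ?_,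
    by rw [Pi.add_apply, hP₁T, hP₂T], hpos⟩
  simp only [Pi.add_apply]
  linear_combination heq₁ t ht + heq₂ t ht

theorem CoupledRiccatiSol.auxLinearSol_fst
    (h : CoupledRiccatiSol T a₀ a₁ a₂ a₃ Q₁ Q₂ R Bbar S G₁ G₂ P₁ P₂ P₁d P₂d)
    (hPt : EqOn (P₁ + P₂) Pt (Icc 0 T)) :
    AuxLinearSol T a₀ a₁ a₂ a₃ Q₁ R Bbar S Pt G₁ P₁ P₁d :=
  ⟨h.1, h.2.2.1, fun t ht => by simpa only [← hPt ht, Pi.add_apply] using h.2.2.2.2.1 t ht,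
    h.2.2.2.2.2.2.1⟩

theorem SummedRiccatiSol.coupledRiccatiSol_sub
    (hPt : SummedRiccatiSol T a₀ a₁ a₂ a₃ Q₁ Q₂ R Bbar S G₁ G₂ Pt Ptd)
    (hP : AuxLinearSol T a₀ a₁ a₂ a₃ Q₁ R Bbar S Pt G₁ P Pd) :
    CoupledRiccatiSol T a₀ a₁ a₂ a₃ Q₁ Q₂ R Bbar S G₁ G₂ P (Pt - P) Pd (Ptd - Pd) := by
  obtain ⟨hPt', hPtd, heqt, hPtT, hpos⟩ := hPt
  obtain ⟨hP', hPd, heq, hPT⟩ := hP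
  have hsum : ∀ t, P t + (Pt - P) t = Pt t := fun t => add_sub_cancel _ _
  refine ⟨hP', fun t ht => (hPt' t ht).sub (hP' t ht), hPd, hPtd.sub hPd, fun t ht => ?_,
    fun t ht => ?_, hPT, by rw [Pi.sub_apply, hPtT, hPT, add_sub_cancel_left], fun t ht => ?_⟩
  · simpa only [hsum] using heq t ht
  · simp only [Pi.sub_apply]
    linear_combination heqt t ht - heq t ht
  · simpa only [hsum] using hpos t ht

end Riccati

theorem coupled_riccati_unique_solvability_general
    (T : ℝ) (hT : 0 < T)
    (a₀ a₁ a₂ a₃ b₀ b₁ b₂ b₃ Q₁ Q₂ R : ℝ → ℝ)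
    (ha₀ : ContinuousOn a₀ (Icc 0 T)) (ha₁ : ContinuousOn a₁ (Icc 0 T))
    (ha₂ : ContinuousOn a₂ (Icc 0 T)) (ha₃ : ContinuousOn a₃ (Icc 0 T))
    (hb₀ : ContinuousOn b₀ (Icc 0 T)) (hb₁ : ContinuousOn b₁ (Icc 0 T))
    (hb₂ : ContinuousOn b₂ (Icc 0 T)) (hb₃ : ContinuousOn b₃ (Icc 0 T))
    (hQ₁c : ContinuousOn Q₁ (Icc 0 T))
    (hRc : ContinuousOn R (Icc 0 T))
    (G₁ G₂ : ℝ)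
    (hsum : ∃ Pt Ptd : ℝ → ℝ,
      SummedRiccatiSol T a₀ a₁ a₂ a₃ Q₁ Q₂ R
        (Bbar1 a₁ a₂ a₃ b₀ b₁ b₂ b₃) (Ssum b₁ b₂ b₃) G₁ G₂ Pt Ptd ∧
      ∀ Qt Qtd : ℝ → ℝ,
        SummedRiccatiSol T a₀ a₁ a₂ a₃ Q₁ Q₂ R
          (Bbar1 a₁ a₂ a₃ b₀ b₁ b₂ b₃) (Ssum b₁ b₂ b₃) G₁ G₂ Qt Qtd →
        EqOn Qt Pt (Icc 0 T)) :
    ∃ P₁ P₂ P₁d P₂d : ℝ → ℝ,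
      CoupledRiccatiSol T a₀ a₁ a₂ a₃ Q₁ Q₂ R
        (Bbar1 a₁ a₂ a₃ b₀ b₁ b₂ b₃) (Ssum b₁ b₂ b₃) G₁ G₂ P₁ P₂ P₁d P₂d ∧
      ∀ S₁ S₂ S₁d S₂d : ℝ → ℝ,
        CoupledRiccatiSol T a₀ a₁ a₂ a₃ Q₁ Q₂ R
          (Bbar1 a₁ a₂ a₃ b₀ b₁ b₂ b₃) (Ssum b₁ b₂ b₃) G₁ G₂ S₁ S₂ S₁d S₂d →
        EqOn S₁ P₁ (Icc 0 T) ∧ EqOn S₂ P₂ (Icc 0 T) := by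
  obtain ⟨Pt, Ptd, hPt, huniq⟩ := hsum
  have hc : ContinuousOn (frozenCoeff a₀ a₁ a₂ a₃ R (Bbar1 a₁ a₂ a₃ b₀ b₁ b₂ b₃) (Ssum b₁ b₂ b₃) Pt)
      (Icc 0 T) :=
    continuousOn_frozenCoeff ha₀ ha₁ ha₂ ha₃ hRc (by unfold Bbar1; fun_prop)
      (by unfold Ssum; fun_prop) (fun t ht => (hPt.1 t ht).continuousWithinAt)
      fun t ht => (hPt.2.2.2.2 t ht).ne'
  obtain ⟨P₁, P₁d, hP₁⟩ := exists_auxLinearSol hT.le hc hQ₁c G₁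
  refine ⟨P₁, Pt - P₁, P₁d, Ptd - P₁d, hPt.coupledRiccatiSol_sub hP₁, fun S₁ S₂ S₁d S₂d hS => ?_⟩
  have hS₁₂ : EqOn (S₁ + S₂) Pt (Icc 0 T) := huniq _ _ hS.summedRiccatiSol_add
  have hS₁ : EqOn S₁ P₁ (Icc 0 T) := (hS.auxLinearSol_fst hS₁₂).eqOn hc hP₁
  refine ⟨hS₁, fun t ht => ?_⟩
  rw [Pi.sub_apply, ← hS₁₂ ht, ← hS₁ ht, Pi.add_apply, add_sub_cancel_left]

/-- Lemma 3.1: solvability of the coupled Riccati system under the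
symmetry assumption (A3). If the summed Riccati equation admits a unique C¹ solution
on `[0,T]`, then the coupled Riccati system admits exactly one admissible solution
pair `(P₁, P₂)`. -/
theorem coupled_riccati_unique_solvability
    (T : ℝ) (hT : 0 < T)
    (a₀ a₁ a₂ a₃ b₀ b₁ b₂ b₃ Q₁ Q₂ R : ℝ → ℝ)
    (ha₀ : ContinuousOn a₀ (Icc 0 T)) (ha₁ : ContinuousOn a₁ (Icc 0 T))
    (ha₂ : ContinuousOn a₂ (Icc 0 T)) (ha₃ : ContinuousOn a₃ (Icc 0 T))
    (hb₀ : ContinuousOn b₀ (Icc 0 T)) (hb₁ : ContinuousOn b₁ (Icc 0 T))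
    (hb₂ : ContinuousOn b₂ (Icc 0 T)) (hb₃ : ContinuousOn b₃ (Icc 0 T))
    (hQ₁c : ContinuousOn Q₁ (Icc 0 T)) (hQ₂c : ContinuousOn Q₂ (Icc 0 T))
    (hRc : ContinuousOn R (Icc 0 T))
    (hR : ∀ t ∈ Icc (0 : ℝ) T, 0 < R t)
    (hQ₁ : ∀ t ∈ Icc (0 : ℝ) T, 0 ≤ Q₁ t) (hQ₂ : ∀ t ∈ Icc (0 : ℝ) T, 0 ≤ Q₂ t)
    (G₁ G₂ : ℝ) (hG₁ : 0 ≤ G₁) (hG₂ : 0 ≤ G₂)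
    (hsum : ∃ Pt Ptd : ℝ → ℝ,
      SummedRiccatiSol T a₀ a₁ a₂ a₃ Q₁ Q₂ R
        (Bbar1 a₁ a₂ a₃ b₀ b₁ b₂ b₃) (Ssum b₁ b₂ b₃) G₁ G₂ Pt Ptd ∧
      ∀ Qt Qtd : ℝ → ℝ,
        SummedRiccatiSol T a₀ a₁ a₂ a₃ Q₁ Q₂ R
          (Bbar1 a₁ a₂ a₃ b₀ b₁ b₂ b₃) (Ssum b₁ b₂ b₃) G₁ G₂ Qt Qtd →
        EqOn Qt Pt (Icc 0 T)) :
    ∃ P₁ P₂ P₁d P₂d : ℝ → ℝ,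
      CoupledRiccatiSol T a₀ a₁ a₂ a₃ Q₁ Q₂ R
        (Bbar1 a₁ a₂ a₃ b₀ b₁ b₂ b₃) (Ssum b₁ b₂ b₃) G₁ G₂ P₁ P₂ P₁d P₂d ∧
      ∀ S₁ S₂ S₁d S₂d : ℝ → ℝ,
        CoupledRiccatiSol T a₀ a₁ a₂ a₃ Q₁ Q₂ R
          (Bbar1 a₁ a₂ a₃ b₀ b₁ b₂ b₃) (Ssum b₁ b₂ b₃) G₁ G₂ S₁ S₂ S₁d S₂d →
        EqOn S₁ P₁ (Icc 0 T) ∧ EqOn S₂ P₂ (Icc 0 T) :=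
  coupled_riccati_unique_solvability_general T hT a₀ a₁ a₂ a₃ b₀ b₁ b₂ b₃ Q₁ Q₂ R ha₀ ha₁ ha₂ ha₃
    hb₀ hb₁ hb₂ hb₃ hQ₁c hRc G₁ G₂ hsum
end

section
/- (Existence step in the proof of Lemma 3.1.) Let P̃ be a C¹ solution on [0,T] of the summed Riccati equation P̃'(t) + 2a₀(t)P̃(t) + (Σᵢ₌₁³ aᵢ(t)²)P̃(t) + Q₁(t) + Q₂(t) + B̄₁(t)P̃(t)² / (R(t) + S(t)P̃(t)) = 0 with P̃(T) = G₁ + G₂ and R(t) + S(t)P̃(t) > 0 on [0,T], and let P₁, P₂ be C¹ solutions on [0,T] of the linear auxiliary terminal-value ODEs P_j'(t) + 2a₀(t)P_j(t) + (Σᵢ₌₁³ aᵢ(t)²)P_j(t) + Q_j(t) + B̄₁(t)P_j(t)P̃(t) / (R(t) + S(t)P̃(t)) = 0 with P_j(T) = G_j (j = 1, 2). Then (P₁, P₂) is an admissible solution pair of the coupled Riccati system: for j = 1, 2, P_j'(t) + 2a₀(t)P_j(t) + (Σᵢ₌₁³ aᵢ(t)²)P_j(t) + Q_j(t) + B̄₁(t)P_j(t)(P₁(t)+P₂(t))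 / (R(t) + S(t)(P₁(t)+P₂(t))) = 0 on [0,T], P_j(T) = G_j, and R(t) + S(t)(P₁(t)+P₂(t)) > 0 on [0,T]. -/
/-!
Summing the two linear auxiliary equations shows that `P₁ + P₂` solves the linear auxiliary
equation with data `Q₁ + Q₂`, `G₁ + G₂`; so does `P̃` itself, since
`B̄₁P̃²/(R + SP̃) = (B̄₁P̃/(R + SP̃))·P̃`. Its coefficient is continuous, hence bounded, on `[0,T]`,
so by Gronwall this terminal-value problem has only one solution: `P₁ + P₂ = P̃`. Substituting
this into the auxiliary equations gives the coupled system.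
-/

open Set

theorem eqOn_Icc_of_hasDerivWithinAt_affine_of_eq_right {a b : ℝ} {L f x y : ℝ → ℝ}
    (hL : ContinuousOn L (Icc a b))
    (hx : ∀ t ∈ Icc a b, HasDerivWithinAt x (L t * x t + f t) (Icc a b) t)
    (hy : ∀ t ∈ Icc a b, HasDerivWithinAt y (L t * y t + f t) (Icc a b) t)
    (hb : x b = y b) :
    EqOn x y (Icc a b) := by
  obtain ⟨C, hC⟩ := isCompact_Icc.exists_bound_of_continuousOn hL
  have hLip : ∀ t ∈ Ioc a b, LipschitzOnWith C.toNNReal (fun z => L t * z + f t) univ := by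
    intro t ht
    refine LipschitzOnWith.of_dist_le_mul fun z _ w _ => ?_
    rw [Real.dist_eq, Real.dist_eq, show L t * z + f t - (L t * w + f t) = L t * (z - w) by ring,
      abs_mul]
    gcongr
    exact (hC t (Ioc_subset_Icc_self ht)).trans (Real.le_coe_toNNReal C)
  refine ODE_solution_unique_of_mem_Icc_left hLip
    (fun t ht => (hx t ht).continuousWithinAt)
    (fun t ht => (hx t (Ioc_subset_Icc_self ht)).mono_of_mem_nhdsWithin (Icc_mem_nhdsLE_of_mem ht))
    (fun _ _ => mem_univ _)
    (fun t ht => (hy t ht).continuousWithinAt)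
    (fun t ht => (hy t (Ioc_subset_Icc_self ht)).mono_of_mem_nhdsWithin (Icc_mem_nhdsLE_of_mem ht))
    (fun _ _ => mem_univ _) hb

section AuxLinear

variable {T : ℝ} {a₀ a₁ a₂ a₃ Q Q' R Bbar S Ptilde : ℝ → ℝ} {G G' : ℝ}

theorem AuxLinearSol.add {P P' Pd Pd' : ℝ → ℝ}
    (hP : AuxLinearSol T a₀ a₁ a₂ a₃ Q R Bbar S Ptilde G P Pd)
    (hP' : AuxLinearSol T a₀ a₁ a₂ a₃ Q' R Bbar S Ptilde G' P' Pd') :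
    AuxLinearSol T a₀ a₁ a₂ a₃ (Q + Q') R Bbar S Ptilde (G + G') (P + P') (Pd + Pd') := by
  obtain ⟨hd, hc, heq, hT⟩ := hP
  obtain ⟨hd', hc', heq', hT'⟩ := hP'
  refine ⟨fun t ht => (hd t ht).add (hd' t ht), hc.add hc', fun t ht => ?_, by simp [hT, hT']⟩
  simp only [Pi.add_apply]
  linear_combination heq t ht + heq' t ht

theorem SummedRiccatiSol.auxLinearSol {Q₁ Q₂ : ℝ → ℝ} {G₁ G₂ : ℝ} {Pd : ℝ → ℝ}
    (h : SummedRiccatiSol T a₀ a₁ a₂ a₃ Q₁ Q₂ R Bbar S G₁ G₂ Ptilde Pd) :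
    AuxLinearSol T a₀ a₁ a₂ a₃ (Q₁ + Q₂) R Bbar S Ptilde (G₁ + G₂) Ptilde Pd := by
  obtain ⟨hd, hc, heq, hT, -⟩ := h
  refine ⟨hd, hc, fun t ht => ?_, hT⟩
  simp only [Pi.add_apply]
  linear_combination heq t ht

theorem AuxLinearSol.eqOn_s8 {P P' Pd Pd' : ℝ → ℝ}
    (ha₀ : ContinuousOn a₀ (Icc 0 T)) (ha₁ : ContinuousOn a₁ (Icc 0 T))
    (ha₂ : ContinuousOn a₂ (Icc 0 T)) (ha₃ : ContinuousOn a₃ (Icc 0 T))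
    (hR : ContinuousOn R (Icc 0 T)) (hBbar : ContinuousOn Bbar (Icc 0 T))
    (hS : ContinuousOn S (Icc 0 T)) (hPtilde : ContinuousOn Ptilde (Icc 0 T))
    (hden : ∀ t ∈ Icc (0 : ℝ) T, R t + S t * Ptilde t ≠ 0)
    (hP : AuxLinearSol T a₀ a₁ a₂ a₃ Q R Bbar S Ptilde G P Pd)
    (hP' : AuxLinearSol T a₀ a₁ a₂ a₃ Q R Bbar S Ptilde G P' Pd') :
    EqOn P P' (Icc 0 T) := by
  set L : ℝ → ℝ := fun t =>
    -(2 * a₀ t + (a₁ t ^ 2 + a₂ t ^ 2 + a₃ t ^ 2) + Bbar t * Ptilde t / (R t + S t * Ptilde t))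
  have hL : ContinuousOn L (Icc 0 T) :=
    (((continuousOn_const.mul ha₀).add (((ha₁.pow 2).add (ha₂.pow 2)).add (ha₃.pow 2))).add
      ((hBbar.mul hPtilde).div (hR.add (hS.mul hPtilde)) hden)).neg
  have hderiv : ∀ {P Pd : ℝ → ℝ}, AuxLinearSol T a₀ a₁ a₂ a₃ Q R Bbar S Ptilde G P Pd →
      ∀ t ∈ Icc (0 : ℝ) T, HasDerivWithinAt P (L t * P t + -Q t) (Icc 0 T) t :=
    fun h t ht => (h.1 t ht).congr_deriv (by linear_combination h.2.2.1 t ht)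
  exact eqOn_Icc_of_hasDerivWithinAt_affine_of_eq_right hL (hderiv hP) (hderiv hP')
    (hP.2.2.2.trans hP'.2.2.2.symm)

end AuxLinear

theorem aux_linear_solutions_solve_coupled_general
    (T : ℝ)
    (a₀ a₁ a₂ a₃ b₀ b₁ b₂ b₃ Q₁ Q₂ R : ℝ → ℝ)
    (ha₀ : ContinuousOn a₀ (Icc 0 T)) (ha₁ : ContinuousOn a₁ (Icc 0 T))
    (ha₂ : ContinuousOn a₂ (Icc 0 T)) (ha₃ : ContinuousOn a₃ (Icc 0 T))
    (hb₀ : ContinuousOn b₀ (Icc 0 T)) (hb₁ : ContinuousOn b₁ (Icc 0 T))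
    (hb₂ : ContinuousOn b₂ (Icc 0 T)) (hb₃ : ContinuousOn b₃ (Icc 0 T))
    (hRc : ContinuousOn R (Icc 0 T))
    (G₁ G₂ : ℝ)
    (Ptilde Ptilded P₁ P₂ P₁d P₂d : ℝ → ℝ)
    (hPt : SummedRiccatiSol T a₀ a₁ a₂ a₃ Q₁ Q₂ R
      (Bbar1 a₁ a₂ a₃ b₀ b₁ b₂ b₃) (Ssum b₁ b₂ b₃) G₁ G₂ Ptilde Ptilded)
    (hP₁ : AuxLinearSol T a₀ a₁ a₂ a₃ Q₁ R
      (Bbar1 a₁ a₂ a₃ b₀ b₁ b₂ b₃) (Ssum b₁ b₂ b₃) Ptilde G₁ P₁ P₁d)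
    (hP₂ : AuxLinearSol T a₀ a₁ a₂ a₃ Q₂ R
      (Bbar1 a₁ a₂ a₃ b₀ b₁ b₂ b₃) (Ssum b₁ b₂ b₃) Ptilde G₂ P₂ P₂d) :
    CoupledRiccatiSol T a₀ a₁ a₂ a₃ Q₁ Q₂ R
      (Bbar1 a₁ a₂ a₃ b₀ b₁ b₂ b₃) (Ssum b₁ b₂ b₃) G₁ G₂ P₁ P₂ P₁d P₂d := by
  have hBbar : ContinuousOn (Bbar1 a₁ a₂ a₃ b₀ b₁ b₂ b₃) (Icc 0 T) :=
    hb₀.add (((ha₁.mul hb₁).add (ha₂.mul hb₂)).add (ha₃.mul hb₃))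
  have hS : ContinuousOn (Ssum b₁ b₂ b₃) (Icc 0 T) := ((hb₁.pow 2).add (hb₂.pow 2)).add (hb₃.pow 2)
  have hPtilde : ContinuousOn Ptilde (Icc 0 T) := fun t ht => (hPt.1 t ht).continuousWithinAt
  have hsum : ∀ t ∈ Icc (0 : ℝ) T, P₁ t + P₂ t = Ptilde t := fun t ht =>
    (hP₁.add hP₂).eqOn_s8 ha₀ ha₁ ha₂ ha₃ hRc hBbar hS hPtilde
      (fun t ht => (hPt.2.2.2.2 t ht).ne') hPt.auxLinearSol ht
  obtain ⟨hd₁, hc₁, heq₁, hT₁⟩ := hP₁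
  obtain ⟨hd₂, hc₂, heq₂, hT₂⟩ := hP₂
  refine ⟨hd₁, hd₂, hc₁, hc₂, fun t ht => ?_, fun t ht => ?_, hT₁, hT₂, fun t ht => ?_⟩
  · rw [hsum t ht]; exact heq₁ t ht
  · rw [hsum t ht]; exact heq₂ t ht
  · rw [hsum t ht]; exact hPt.2.2.2.2 t ht

/-- existence step in the proof of Lemma 3.1. If `P̃` is a C¹ solution
of the summed Riccati equation and `P₁, P₂` solve the linear auxiliary terminal-value
ODEs obtained by freezing the nonlinearity at `P̃`, then `(P₁, P₂)` is an admissible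
solution pair of the coupled Riccati system. -/
theorem aux_linear_solutions_solve_coupled
    (T : ℝ) (hT : 0 < T)
    (a₀ a₁ a₂ a₃ b₀ b₁ b₂ b₃ Q₁ Q₂ R : ℝ → ℝ)
    (ha₀ : ContinuousOn a₀ (Icc 0 T)) (ha₁ : ContinuousOn a₁ (Icc 0 T))
    (ha₂ : ContinuousOn a₂ (Icc 0 T)) (ha₃ : ContinuousOn a₃ (Icc 0 T))
    (hb₀ : ContinuousOn b₀ (Icc 0 T)) (hb₁ : ContinuousOn b₁ (Icc 0 T))
    (hb₂ : ContinuousOn b₂ (Icc 0 T)) (hb₃ : ContinuousOn b₃ (Icc 0 T))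
    (hQ₁c : ContinuousOn Q₁ (Icc 0 T)) (hQ₂c : ContinuousOn Q₂ (Icc 0 T))
    (hRc : ContinuousOn R (Icc 0 T))
    (hR : ∀ t ∈ Icc (0 : ℝ) T, 0 < R t)
    (hQ₁ : ∀ t ∈ Icc (0 : ℝ) T, 0 ≤ Q₁ t) (hQ₂ : ∀ t ∈ Icc (0 : ℝ) T, 0 ≤ Q₂ t)
    (G₁ G₂ : ℝ) (hG₁ : 0 ≤ G₁) (hG₂ : 0 ≤ G₂)
    (Ptilde Ptilded P₁ P₂ P₁d P₂d : ℝ → ℝ)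
    (hPt : SummedRiccatiSol T a₀ a₁ a₂ a₃ Q₁ Q₂ R
      (Bbar1 a₁ a₂ a₃ b₀ b₁ b₂ b₃) (Ssum b₁ b₂ b₃) G₁ G₂ Ptilde Ptilded)
    (hP₁ : AuxLinearSol T a₀ a₁ a₂ a₃ Q₁ R
      (Bbar1 a₁ a₂ a₃ b₀ b₁ b₂ b₃) (Ssum b₁ b₂ b₃) Ptilde G₁ P₁ P₁d)
    (hP₂ : AuxLinearSol T a₀ a₁ a₂ a₃ Q₂ R
      (Bbar1 a₁ a₂ a₃ b₀ b₁ b₂ b₃) (Ssum b₁ b₂ b₃) Ptilde G₂ P₂ P₂d) :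
    CoupledRiccatiSol T a₀ a₁ a₂ a₃ Q₁ Q₂ R
      (Bbar1 a₁ a₂ a₃ b₀ b₁ b₂ b₃) (Ssum b₁ b₂ b₃) G₁ G₂ P₁ P₂ P₁d P₂d :=
  aux_linear_solutions_solve_coupled_general T a₀ a₁ a₂ a₃ b₀ b₁ b₂ b₃ Q₁ Q₂ R ha₀ ha₁ ha₂ ha₃ hb₀
    hb₁ hb₂ hb₃ hRc G₁ G₂ Ptilde Ptilded P₁ P₂ P₁d P₂d hPt hP₁ hP₂
end
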